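/- arXiv:1802.03644 — 8 statements merged into one kernel-verified Lean document; each statement's English description precedes it below -/
import Mathlib

section
/- For every cost matrix C ∈ ℝ^{m×n}, every regularization parameter λ > 0, and all probability vectors μ ∈ Σ_m and ν ∈ Σ_n, the entropy-regularized optimal transport problem min over π ∈ U(μ,ν) of ⟨π, C⟩ − H(π)/λ has exactly one minimizer (i.e., there exists a unique π^λ ∈ U(μ,ν) attaining the minimum). -/
/-- Membership in the transport polytope `U(μ, ν)`. -/
def inU {m n : ℕ} (μ : Fin m → ℝ) (ν : Fin n → ℝ) (π : Matrix (Fin m) (Fin n) ℝ) : Prop :=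
  (∀ i j, 0 ≤ π i j) ∧ (∀ i, ∑ j, π i j = μ i) ∧ (∀ j, ∑ i, π i j = ν j)

/-- The entropy-regularized optimal transport objective `⟨π, C⟩ - H(π)/λ`, where
`H(π) = -∑ᵢⱼ πᵢⱼ (log πᵢⱼ - 1)` (note `Real.log 0 = 0`, matching the convention
`0 · (log 0 - 1) = 0`). -/
noncomputable def rotObj {m n : ℕ} (C : Matrix (Fin m) (Fin n) ℝ) (lam : ℝ)
    (π : Matrix (Fin m) (Fin n) ℝ) : ℝ :=
  (∑ i, ∑ j, π i j * C i j) - (-∑ i, ∑ j, π i j * (Real.log (π i j) - 1)) / lam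

/-! The transport polytope is nonempty (it contains `μ νᵀ`), compact and convex, and the objective
is continuous, so a minimizer exists. The objective is a sum over the entries of the functions
`x ↦ x c + x (log x - 1) / λ`, each strictly convex on `[0, ∞)` because `x log x` is, so it is
strictly convex on the polytope and the minimizer is unique. -/

open Set Finset

section SeparableSum

variable {𝕜 ι E β : Type*} [Fintype ι] [Semiring 𝕜] [PartialOrder 𝕜] [AddCommMonoid E]
  [Module 𝕜 E] [AddCommMonoid β] [PartialOrder β] [IsOrderedCancelAddMonoid β] [Module 𝕜 β]

theorem strictConvexOn_univ_pi_sum {s : ι → Set E} {f : ι → E → β}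
    (hf : ∀ i, StrictConvexOn 𝕜 (s i) (f i)) :
    StrictConvexOn 𝕜 (univ.pi s) fun x => ∑ i, f i (x i) := by
  refine ⟨convex_pi fun i _ => (hf i).1, fun x hx y hy hxy a b ha hb hab => ?_⟩
  obtain ⟨k, hk⟩ := Function.ne_iff.1 hxy
  simp only [smul_sum, ← sum_add_distrib]
  refine sum_lt_sum (fun i _ => (hf i).convexOn.2 (hx i trivial) (hy i trivial) ha.le hb.le hab)
    ⟨k, mem_univ k, (hf k).2 (hx k trivial) (hy k trivial) hk ha hb hab⟩

end SeparableSum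

theorem strictConvexOn_mul_add_mul_log_sub_div (c : ℝ) {lam : ℝ} (hlam : 0 < lam) :
    StrictConvexOn ℝ (Ici 0) fun x => x * c + x * (Real.log x - 1) / lam := by
  refine ⟨convex_Ici 0, fun x hx y hy hxy a b ha hb hab => ?_⟩
  have h := Real.strictConvexOn_mul_log.2 hx hy hxy ha hb hab
  simp only [smul_eq_mul] at h ⊢
  rw [← sub_pos] at h ⊢
  convert div_pos h hlam using 1
  ring

variable {m n : ℕ}

theorem rotObj_eq_sum (C : Matrix (Fin m) (Fin n) ℝ) (lam : ℝ) (π : Matrix (Fin m) (Fin n) ℝ) :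
    rotObj C lam π = ∑ i, ∑ j, (π i j * C i j + π i j * (Real.log (π i j) - 1) / lam) := by
  simp only [rotObj, sum_add_distrib, ← sum_div]
  ring

theorem continuous_rotObj (C : Matrix (Fin m) (Fin n) ℝ) (lam : ℝ) : Continuous (rotObj C lam) := by
  simp only [funext (rotObj_eq_sum C lam), mul_sub, mul_one]
  fun_prop

theorem strictConvexOn_rotObj (C : Matrix (Fin m) (Fin n) ℝ) {lam : ℝ} (hlam : 0 < lam) :
    StrictConvexOn ℝ {π : Matrix (Fin m) (Fin n) ℝ | ∀ i j, 0 ≤ π i j} (rotObj C lam) := by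
  have hset : {π : Matrix (Fin m) (Fin n) ℝ | ∀ i j, 0 ≤ π i j} =
      Set.univ.pi fun _ => Set.univ.pi fun _ => Ici (0 : ℝ) := by
    ext π; exact ⟨fun h i _ j _ => h i j, fun h i j => h i trivial j trivial⟩
  rw [hset, funext (rotObj_eq_sum C lam)]
  exact strictConvexOn_univ_pi_sum fun i => strictConvexOn_univ_pi_sum fun j =>
    strictConvexOn_mul_add_mul_log_sub_div (C i j) hlam

theorem inU_vecMulVec {μ : Fin m → ℝ} {ν : Fin n → ℝ} (hμ0 : ∀ i, 0 ≤ μ i) (hμ1 : ∑ i, μ i = 1)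
    (hν0 : ∀ j, 0 ≤ ν j) (hν1 : ∑ j, ν j = 1) : inU μ ν (Matrix.vecMulVec μ ν) := by
  refine ⟨fun i j => mul_nonneg (hμ0 i) (hν0 j), fun i => ?_, fun j => ?_⟩
  · simp [Matrix.vecMulVec_apply, ← mul_sum, hν1]
  · simp [Matrix.vecMulVec_apply, ← sum_mul, hμ1]

theorem convex_setOf_inU (μ : Fin m → ℝ) (ν : Fin n → ℝ) : Convex ℝ {π | inU μ ν π} := by
  rintro π ⟨hπ0, hπrow, hπcol⟩ σ ⟨hσ0, hσrow, hσcol⟩ a b ha hb hab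
  refine ⟨fun i j => ?_, fun i => ?_, fun j => ?_⟩
  · simpa using add_nonneg (mul_nonneg ha (hπ0 i j)) (mul_nonneg hb (hσ0 i j))
  · simp [sum_add_distrib, ← mul_sum, hπrow, hσrow, ← add_mul, hab]
  · simp [sum_add_distrib, ← mul_sum, hπcol, hσcol, ← add_mul, hab]

theorem isClosed_setOf_inU (μ : Fin m → ℝ) (ν : Fin n → ℝ) : IsClosed {π | inU μ ν π} := by
  simp only [inU, Set.ofPred_and, Set.ofPred_forall]
  refine .inter
    (isClosed_iInter fun i => isClosed_iInter fun j => isClosed_le (by fun_prop) (by fun_prop))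
    (.inter (isClosed_iInter fun i => isClosed_eq (by fun_prop) (by fun_prop))
      (isClosed_iInter fun j => isClosed_eq (by fun_prop) (by fun_prop)))

theorem isCompact_setOf_inU (μ : Fin m → ℝ) (ν : Fin n → ℝ) : IsCompact {π | inU μ ν π} := by
  refine (isCompact_univ_pi fun i => isCompact_univ_pi fun _ => isCompact_Icc (a := 0) (b := μ i))
    |>.of_isClosed_subset (isClosed_setOf_inU μ ν) fun π ⟨h0, hrow, _⟩ i _ j _ => ⟨h0 i j, ?_⟩
  exact hrow i ▸ single_le_sum (fun j' _ => h0 i j') (mem_univ j)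

/-- For every cost matrix `C`, every `λ > 0` and all probability vectors `μ ∈ Σ_m`, `ν ∈ Σ_n`,
the entropy-regularized optimal transport problem has exactly one minimizer over `U(μ, ν)`. -/
theorem rot_exists_unique_minimizer (m n : ℕ)
    (C : Matrix (Fin m) (Fin n) ℝ) (lam : ℝ) (hlam : 0 < lam)
    (μ : Fin m → ℝ) (ν : Fin n → ℝ)
    (hμ0 : ∀ i, 0 ≤ μ i) (hμ1 : ∑ i, μ i = 1)
    (hν0 : ∀ j, 0 ≤ ν j) (hν1 : ∑ j, ν j = 1) :
    ∃! π : Matrix (Fin m) (Fin n) ℝ,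
      inU μ ν π ∧ ∀ π' : Matrix (Fin m) (Fin n) ℝ, inU μ ν π' →
        rotObj C lam π ≤ rotObj C lam π' := by
  obtain ⟨π, hπ, hmin⟩ := (isCompact_setOf_inU μ ν).exists_isMinOn
    ⟨_, inU_vecMulVec hμ0 hμ1 hν0 hν1⟩ (continuous_rotObj C lam).continuousOn
  have hstrict : StrictConvexOn ℝ {π | inU μ ν π} (rotObj C lam) :=
    (strictConvexOn_rotObj C hlam).subset (fun π' h' => h'.1) (convex_setOf_inU μ ν)
  exact ⟨π, ⟨hπ, fun _ h => hmin h⟩, fun π' ⟨hπ', hmin'⟩ =>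
    hstrict.eq_of_isMinOn (fun _ h => hmin' _ h) hmin hπ' hπ⟩
end

section
/- Let λ > 0 and let C₁, C₂ ∈ ℝ^{n×n} be distance matrices, i.e. matrices with nonnegative entries, zero diagonal, symmetry ((C_k)_{ij} = (C_k)_{ji}), and satisfying the triangle inequality ((C_k)_{ij} ≤ (C_k)_{il} + (C_k)_{lj} for all i,j,l). Suppose there exist entrywise-positive vectors a₁, b₁, a₂, b₂ ∈ ℝ^n such that diag(a₁)·exp(−λC₁)·diag(b₁) = diag(a₂)·exp(−λC₂)·diag(b₂), where exp(−λC) denotes the componentwise exponential. Then C₁ = C₂. (Consequently, the map C ↦ π^λ(C, μ, ν) restricted to the cone of n×n distance matrices is injective.) -/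
/-- `C` is a distance matrix: nonnegative entries, zero diagonal, symmetric, and satisfying
the triangle inequality. -/
def IsDistanceMatrix {n : ℕ} (C : Matrix (Fin n) (Fin n) ℝ) : Prop :=
  (∀ i j, 0 ≤ C i j) ∧ (∀ i, C i i = 0) ∧ (∀ i j, C i j = C j i) ∧
    (∀ i j l, C i j ≤ C i l + C l j)

/-- If two distance matrices `C₁, C₂` satisfy
`diag(a₁)·exp(−λC₁)·diag(b₁) = diag(a₂)·exp(−λC₂)·diag(b₂)` for some entrywise-positive
vectors `a₁, b₁, a₂, b₂` and some `λ > 0`, then `C₁ = C₂`.  Consequently, the map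
`C ↦ π^λ(C, μ, ν)` restricted to the cone of distance matrices is injective. -/
theorem distance_matrix_scaling_injective (n : ℕ) (lam : ℝ) (hlam : 0 < lam)
    (C₁ C₂ : Matrix (Fin n) (Fin n) ℝ)
    (hC₁ : IsDistanceMatrix C₁) (hC₂ : IsDistanceMatrix C₂)
    (a₁ b₁ a₂ b₂ : Fin n → ℝ)
    (ha₁ : ∀ i, 0 < a₁ i) (hb₁ : ∀ i, 0 < b₁ i)
    (ha₂ : ∀ i, 0 < a₂ i) (hb₂ : ∀ i, 0 < b₂ i)
    (heq : ∀ i j, a₁ i * Real.exp (-lam * C₁ i j) * b₁ j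
                = a₂ i * Real.exp (-lam * C₂ i j) * b₂ j) :
    C₁ = C₂ := by
  obtain ⟨-, h1d, h1s, -⟩ := hC₁
  obtain ⟨-, h2d, h2s, -⟩ := hC₂
  -- From the diagonal: a₁ k * b₁ k = a₂ k * b₂ k
  have hd : ∀ k, a₁ k * b₁ k = a₂ k * b₂ k := by
    intro k
    have := heq k k
    simpa [h1d, h2d] using this
  ext i j
  have h1 := heq i j
  have h2 := heq j i
  rw [h1s j i, h2s j i] at h2
  set E₁ := Real.exp (-lam * C₁ i j) with hE₁
  set E₂ := Real.exp (-lam * C₂ i j) with hE₂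
  have e1 : E₁ ^ 2 * (a₁ i * b₁ i * (a₁ j * b₁ j))
      = E₂ ^ 2 * (a₂ i * b₂ i * (a₂ j * b₂ j)) := by
    linear_combination (a₁ j * E₁ * b₁ i) * h1 + (a₂ i * E₂ * b₂ j) * h2
  rw [← hd i, ← hd j] at e1
  have hApos : 0 < a₁ i * b₁ i * (a₁ j * b₁ j) := mul_pos (mul_pos (ha₁ i) (hb₁ i)) (mul_pos (ha₁ j) (hb₁ j))
  have e2 : E₁ ^ 2 = E₂ ^ 2 := mul_right_cancel₀ (ne_of_gt hApos) e1
  have e3 : E₁ = E₂ := by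
    have hp1 : 0 < E₁ := Real.exp_pos _
    have hp2 : 0 < E₂ := Real.exp_pos _
    nlinarith
  have := Real.exp_injective (hE₁ ▸ hE₂ ▸ e3)
  have hne : (-lam : ℝ) ≠ 0 := by linarith
  exact mul_left_cancel₀ hne this
end

section
/- Let K ∈ ℝ^{n×n} be a symmetric matrix with strictly positive entries, and let a, b ∈ ℝ^n be entrywise-positive vectors such that the matrix diag(a)·K·diag(b) is symmetric. Then there exists s > 0 such that a = s·b. -/
/-- If `K` is a symmetric matrix with strictly positive entries and `a, b` are
entrywise-positive vectors such that `diag(a)·K·diag(b)` is symmetric, then `a = s·b`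
for some `s > 0`. -/
theorem diag_scaling_symmetric (n : ℕ) (K : Matrix (Fin n) (Fin n) ℝ)
    (hKpos : ∀ i j, 0 < K i j) (hKsym : ∀ i j, K i j = K j i)
    (a b : Fin n → ℝ) (ha : ∀ i, 0 < a i) (hb : ∀ i, 0 < b i)
    (hsym : ∀ i j, a i * K i j * b j = a j * K j i * b i) :
    ∃ s : ℝ, 0 < s ∧ ∀ i, a i = s * b i := by
  rcases Nat.eq_zero_or_pos n with h | h
  · subst h
    exact ⟨1, one_pos, fun i => i.elim0⟩
  · set i0 : Fin n := ⟨0, h⟩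
    refine ⟨a i0 / b i0, div_pos (ha i0) (hb i0), fun i => ?_⟩
    have hs := hsym i i0
    rw [hKsym i i0] at hs
    have hK := hKpos i0 i
    have hbi := hb i
    have hbi0 := hb i0
    field_simp
    nlinarith [mul_pos hbi hbi0]
end

section
/- Let μ₁, μ₂ ∈ Σ_m and ν₁, ν₂ ∈ Σ_n, and write Δμ = μ₁ − μ₂, Δν = ν₁ − ν₂. Then for every π₁ ∈ U(μ₁, ν₁) and every π₂ ∈ U(μ₂, ν₂), one has ‖π₁ − π₂‖_F² ≥ (m‖Δμ‖₂² + n‖Δν‖₂²)/(mn), where ‖·‖₂ is the Euclidean norm on vectors. -/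
/-- For probability vectors `μ₁, μ₂ ∈ Σ_m`, `ν₁, ν₂ ∈ Σ_n`, any `π₁ ∈ U(μ₁, ν₁)` and
`π₂ ∈ U(μ₂, ν₂)` satisfy `‖π₁ − π₂‖_F² ≥ (m‖Δμ‖₂² + n‖Δν‖₂²)/(mn)`. -/
theorem transport_polytope_frobenius_lower_bound (m n : ℕ)
    (μ₁ μ₂ : Fin m → ℝ) (ν₁ ν₂ : Fin n → ℝ)
    (hμ₁0 : ∀ i, 0 ≤ μ₁ i) (hμ₁1 : ∑ i, μ₁ i = 1)
    (hμ₂0 : ∀ i, 0 ≤ μ₂ i) (hμ₂1 : ∑ i, μ₂ i = 1)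
    (hν₁0 : ∀ j, 0 ≤ ν₁ j) (hν₁1 : ∑ j, ν₁ j = 1)
    (hν₂0 : ∀ j, 0 ≤ ν₂ j) (hν₂1 : ∑ j, ν₂ j = 1)
    (π₁ π₂ : Matrix (Fin m) (Fin n) ℝ)
    (hπ₁ : inU μ₁ ν₁ π₁) (hπ₂ : inU μ₂ ν₂ π₂) :
    ((m : ℝ) * ∑ i, (μ₁ i - μ₂ i) ^ 2 + (n : ℝ) * ∑ j, (ν₁ j - ν₂ j) ^ 2) / ((m : ℝ) * n)
      ≤ ∑ i, ∑ j, (π₁ i j - π₂ i j) ^ 2 := by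
  -- m and n are positive
  have hm : 0 < m := by
    rcases Nat.eq_zero_or_pos m with h | h
    · subst h; simp at hμ₁1
    · exact h
  have hn : 0 < n := by
    rcases Nat.eq_zero_or_pos n with h | h
    · subst h; simp at hν₁1
    · exact h
  have hmR : (0 : ℝ) < m := by exact_mod_cast hm
  have hnR : (0 : ℝ) < n := by exact_mod_cast hn
  set u : Fin m → ℝ := fun i => μ₁ i - μ₂ i with hu
  set v : Fin n → ℝ := fun j => ν₁ j - ν₂ j with hv
  set D : Fin m → Fin n → ℝ := fun i j => π₁ i j - π₂ i j with hD
  have hrow : ∀ i, ∑ j, D i j = u i := by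
    intro i
    simp [hD, hu, Finset.sum_sub_distrib, hπ₁.2.1 i, hπ₂.2.1 i]
  have hcol : ∀ j, ∑ i, D i j = v j := by
    intro j
    simp [hD, hv, Finset.sum_sub_distrib, hπ₁.2.2 j, hπ₂.2.2 j]
  have hu0 : ∑ i, u i = 0 := by
    simp [hu, Finset.sum_sub_distrib, hμ₁1, hμ₂1]
  have hv0 : ∑ j, v j = 0 := by
    simp [hv, Finset.sum_sub_distrib, hν₁1, hν₂1]
  set A : ℝ := ∑ i, u i ^ 2 with hA
  set B : ℝ := ∑ j, v j ^ 2 with hB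
  -- the key nonnegativity
  have key : 0 ≤ ∑ i, ∑ j, (D i j - (u i / n + v j / m)) ^ 2 :=
    Finset.sum_nonneg fun i _ => Finset.sum_nonneg fun j _ => sq_nonneg _
  -- compute the cross term ∑∑ D*(u/n + v/m)
  have cross1 : ∑ i, ∑ j, D i j * (u i / n) = A / n := by
    rw [hA, Finset.sum_div]
    refine Finset.sum_congr rfl fun i _ => ?_
    rw [← Finset.sum_mul, hrow i]; ring
  have cross2 : ∑ i, ∑ j, D i j * (v j / m) = B / m := by
    rw [Finset.sum_comm, hB, Finset.sum_div]
    refine Finset.sum_congr rfl fun j _ => ?_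
    rw [← Finset.sum_mul, hcol j]; ring
  -- compute ∑∑ (u/n)^2, ∑∑ (v/m)^2, ∑∑ (u/n)*(v/m)
  have sq1 : ∑ i, ∑ _j : Fin n, (u i / n) ^ 2 = A / n := by
    rw [hA, Finset.sum_div]
    refine Finset.sum_congr rfl fun i _ => ?_
    simp only [Finset.sum_const, Finset.card_univ, Fintype.card_fin, nsmul_eq_mul]
    field_simp
  have sq2 : ∑ _i : Fin m, ∑ j, (v j / m) ^ 2 = B / m := by
    rw [Finset.sum_comm, hB, Finset.sum_div]
    refine Finset.sum_congr rfl fun j _ => ?_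
    simp only [Finset.sum_const, Finset.card_univ, Fintype.card_fin, nsmul_eq_mul]
    field_simp
  have sq3 : ∑ i, ∑ j, (u i / n) * (v j / m) = 0 := by
    have : ∀ i, ∑ j, (u i / n) * (v j / m) = (u i / n) * ((∑ j, v j) / m) := by
      intro i
      rw [← Finset.mul_sum, Finset.sum_div]
    simp [this, hv0]
  -- expand the square
  have expand : ∑ i, ∑ j, (D i j - (u i / n + v j / m)) ^ 2
      = (∑ i, ∑ j, D i j ^ 2) - (A / n + B / m) := by
    have step : ∀ i j, (D i j - (u i / n + v j / m)) ^ 2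
        = D i j ^ 2 - 2 * (D i j * (u i / n)) - 2 * (D i j * (v j / m))
          + (u i / n) ^ 2 + (v j / m) ^ 2 + 2 * ((u i / n) * (v j / m)) := by
      intro i j; ring
    calc ∑ i, ∑ j, (D i j - (u i / n + v j / m)) ^ 2
        = (∑ i, ∑ j, D i j ^ 2) - 2 * (∑ i, ∑ j, D i j * (u i / n))
            - 2 * (∑ i, ∑ j, D i j * (v j / m))
            + (∑ i, ∑ _j : Fin n, (u i / n) ^ 2) + (∑ _i : Fin m, ∑ j, (v j / m) ^ 2)
            + 2 * (∑ i, ∑ j, (u i / n) * (v j / m)) := by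
          simp only [step, Finset.sum_add_distrib, Finset.sum_sub_distrib, Finset.mul_sum]
      _ = (∑ i, ∑ j, D i j ^ 2) - (A / n + B / m) := by
          rw [cross1, cross2, sq1, sq2, sq3]; ring
  have main : A / n + B / m ≤ ∑ i, ∑ j, D i j ^ 2 := by
    rw [expand] at key; linarith
  have lhs_eq : ((m : ℝ) * A + (n : ℝ) * B) / ((m : ℝ) * n) = A / n + B / m := by
    field_simp
  calc ((m : ℝ) * ∑ i, (μ₁ i - μ₂ i) ^ 2 + (n : ℝ) * ∑ j, (ν₁ j - ν₂ j) ^ 2) / ((m : ℝ) * n)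
      = A / n + B / m := lhs_eq
    _ ≤ ∑ i, ∑ j, D i j ^ 2 := main
    _ = ∑ i, ∑ j, (π₁ i j - π₂ i j) ^ 2 := rfl
end

section
/- Let μ, μ̂ ∈ Σ_m and ν, ν̂ ∈ Σ_n, and write Δμ = μ − μ̂, Δν = ν − ν̂. Then for every π₁ ∈ U(μ, ν) and every π₂ ∈ U(μ̂, ν̂), one has ‖π₁ − π₂‖₁ ≥ sqrt((‖Δμ‖₁² + ‖Δν‖₁²)/(mn)). In particular, any matching matrix recovered under the (possibly erroneous) empirical marginals μ̂, ν̂ differs from the ground-truth matching matrix in U(μ,ν) by at least this amount in entrywise 1-norm. -/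
/-- For probability vectors `μ, μ̂ ∈ Σ_m`, `ν, ν̂ ∈ Σ_n`, any `π₁ ∈ U(μ, ν)` and
`π₂ ∈ U(μ̂, ν̂)` satisfy `‖π₁ − π₂‖₁ ≥ sqrt((‖Δμ‖₁² + ‖Δν‖₁²)/(mn))`, where
`Δμ = μ − μ̂`, `Δν = ν − ν̂`. -/
theorem transport_polytope_l1_lower_bound (m n : ℕ)
    (μ μhat : Fin m → ℝ) (ν νhat : Fin n → ℝ)
    (hμ0 : ∀ i, 0 ≤ μ i) (hμ1 : ∑ i, μ i = 1)
    (hμhat0 : ∀ i, 0 ≤ μhat i) (hμhat1 : ∑ i, μhat i = 1)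
    (hν0 : ∀ j, 0 ≤ ν j) (hν1 : ∑ j, ν j = 1)
    (hνhat0 : ∀ j, 0 ≤ νhat j) (hνhat1 : ∑ j, νhat j = 1)
    (π₁ π₂ : Matrix (Fin m) (Fin n) ℝ)
    (hπ₁ : inU μ ν π₁) (hπ₂ : inU μhat νhat π₂) :
    Real.sqrt (((∑ i, |μ i - μhat i|) ^ 2 + (∑ j, |ν j - νhat j|) ^ 2) / ((m : ℝ) * n))
      ≤ ∑ i, ∑ j, |π₁ i j - π₂ i j| := by

  obtain ⟨h1pos, h1r, h1c⟩ := hπ₁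
  obtain ⟨h2pos, h2r, h2c⟩ := hπ₂
  set S := ∑ i, ∑ j, |π₁ i j - π₂ i j| with hS
  have hS0 : 0 ≤ S := Finset.sum_nonneg fun i _ => Finset.sum_nonneg fun j _ => abs_nonneg _
  have ha : (∑ i, |μ i - μhat i|) ≤ S := by
    apply Finset.sum_le_sum
    intro i _
    rw [← h1r i, ← h2r i, ← Finset.sum_sub_distrib]
    exact Finset.abs_sum_le_sum_abs _ _
  have hb : (∑ j, |ν j - νhat j|) ≤ S := by
    rw [hS, Finset.sum_comm]
    apply Finset.sum_le_sum
    intro j _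
    rw [← h1c j, ← h2c j, ← Finset.sum_sub_distrib]
    exact Finset.abs_sum_le_sum_abs _ _
  have ha0 : 0 ≤ ∑ i, |μ i - μhat i| := Finset.sum_nonneg fun i _ => abs_nonneg _
  have hb0 : 0 ≤ ∑ j, |ν j - νhat j| := Finset.sum_nonneg fun j _ => abs_nonneg _
  have hm : 1 ≤ m := by
    rcases Nat.eq_zero_or_pos m with h | h
    · subst h; simp at hμ1
    · exact h
  have hn : 1 ≤ n := by
    rcases Nat.eq_zero_or_pos n with h | h
    · subst h; simp at hν1
    · exact h
  have key : ((∑ i, |μ i - μhat i|) ^ 2 + (∑ j, |ν j - νhat j|) ^ 2) / ((m : ℝ) * n) ≤ S ^ 2 := by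
    by_cases hmn : m = 1 ∧ n = 1
    · obtain ⟨hm1, hn1⟩ := hmn
      subst hm1; subst hn1
      rw [Fin.sum_univ_one] at hμ1 hμhat1 hν1 hνhat1
      have e1 : (∑ i : Fin 1, |μ i - μhat i|) = 0 := by
        rw [Fin.sum_univ_one, hμ1, hμhat1]; simp
      have e2 : (∑ j : Fin 1, |ν j - νhat j|) = 0 := by
        rw [Fin.sum_univ_one, hν1, hνhat1]; simp
      rw [e1, e2]
      norm_num
      positivity
    · have h2mn : (2 : ℝ) ≤ (m : ℝ) * n := by
        rcases Nat.lt_or_ge m 2 with h | h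
        · have hm1 : m = 1 := by omega
          have hn2 : 2 ≤ n := by
            rcases Nat.lt_or_ge n 2 with h' | h'
            · exact absurd ⟨hm1, by omega⟩ hmn
            · exact h'
          have : (2 : ℝ) ≤ (n : ℝ) := by exact_mod_cast hn2
          rw [hm1]; push_cast; linarith
        · have : (2 : ℝ) ≤ (m : ℝ) := by exact_mod_cast h
          have : (1 : ℝ) ≤ (n : ℝ) := by exact_mod_cast hn
          nlinarith
      have hmn0 : (0 : ℝ) < (m : ℝ) * n := by linarith
      rw [div_le_iff₀ hmn0]
      have h1 : (∑ i, |μ i - μhat i|) ^ 2 ≤ S ^ 2 := by nlinarith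
      have h2 : (∑ j, |ν j - νhat j|) ^ 2 ≤ S ^ 2 := by nlinarith
      nlinarith [sq_nonneg S]
  calc Real.sqrt (((∑ i, |μ i - μhat i|) ^ 2 + (∑ j, |ν j - νhat j|) ^ 2) / ((m : ℝ) * n))
      ≤ Real.sqrt (S ^ 2) := Real.sqrt_le_sqrt key
    _ = S := by rw [Real.sqrt_sq hS0]
end

section
/- Let λ > 0 and let C₀, C_pred ∈ ℝ^{m×n}. Suppose π₀ and π_pred are m×n matrices with strictly positive entries satisfying log π₀ = λ(−C₀ + a1^T + 1b^T) and log π_pred = λ(−C_pred + a'1^T + 1b'^T) entrywise, for some vectors a, a' ∈ ℝ^m and b, b' ∈ ℝ^n. Let ΔC = C₀ − C_pred and suppose ΔC cannot be written in the form u1^T + 1v^T for any u ∈ ℝ^m, v ∈ ℝ^n. Then ‖log π₀ − log π_pred‖_F² ≥ λ²·inf over (u,v) of ‖ΔC − (u1^T + 1v^T)‖_F², and this lower bound is strictly positive; in particular π₀ ≠ π_pred. -/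
/-!
Subtracting the two optimality conditions gives
`log π₀ − log π_pred = λ(−ΔC + (a − a')𝟙ᵀ + 𝟙(b − b')ᵀ)`, so the squared error is `λ²` times the
residual of `ΔC` at one particular `(u, v)`, hence at least `λ²` times the infimum. The infimum is
attained at the double centering of `ΔC`: its residual has vanishing row and column sums, so it is
orthogonal to every `u𝟙ᵀ + 𝟙vᵀ`, and it vanishes only if `ΔC` itself has that form.
-/

/-- The infimum over all vectors `u, v` of `‖D − (u𝟙ᵀ + 𝟙vᵀ)‖_F²`. -/
noncomputable def residInf {m n : ℕ} (D : Matrix (Fin m) (Fin n) ℝ) : ℝ :=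
  sInf {r : ℝ | ∃ (u : Fin m → ℝ) (v : Fin n → ℝ),
    r = ∑ i, ∑ j, (D i j - (u i + v j)) ^ 2}

open Finset

section AdditiveResidual

variable {ι κ : Type*} [Fintype ι] [Fintype κ]

def additiveResidual (D : Matrix ι κ ℝ) (u : ι → ℝ) (v : κ → ℝ) : ℝ :=
  ∑ i, ∑ j, (D i j - (u i + v j)) ^ 2

theorem additiveResidual_nonneg (D : Matrix ι κ ℝ) (u : ι → ℝ) (v : κ → ℝ) :
    0 ≤ additiveResidual D u v := by
  unfold additiveResidual; positivity

theorem additiveResidual_eq_zero_iff {D : Matrix ι κ ℝ} {u : ι → ℝ} {v : κ → ℝ} :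
    additiveResidual D u v = 0 ↔ ∀ i j, D i j = u i + v j := by
  have hsq : ∀ i j, 0 ≤ (D i j - (u i + v j)) ^ 2 := fun _ _ => sq_nonneg _
  rw [additiveResidual, Fintype.sum_eq_zero_iff_of_nonneg fun i => sum_nonneg fun j _ => hsq i j]
  refine funext_iff.trans (forall_congr' fun i => ?_)
  rw [Pi.zero_apply, Fintype.sum_eq_zero_iff_of_nonneg (hsq i)]
  simp only [funext_iff, Pi.zero_apply, sq_eq_zero_iff, sub_eq_zero]

theorem sum_sum_mul_add_eq_zero {R : Matrix ι κ ℝ} (hrow : ∀ i, ∑ j, R i j = 0)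
    (hcol : ∀ j, ∑ i, R i j = 0) (w : ι → ℝ) (z : κ → ℝ) :
    ∑ i, ∑ j, R i j * (w i + z j) = 0 := by
  simp only [mul_add, sum_add_distrib]
  rw [sum_comm (f := fun i j => R i j * z j)]
  simp [← sum_mul, hrow, hcol]

/-- Double centering: `ρ i` is the `i`-th row mean minus the grand mean, `γ j` the `j`-th
column mean. -/
theorem exists_residual_row_col_sum_eq_zero (D : Matrix ι κ ℝ) :
    ∃ (ρ : ι → ℝ) (γ : κ → ℝ), (∀ i, ∑ j, (D i j - (ρ i + γ j)) = 0) ∧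
      ∀ j, ∑ i, (D i j - (ρ i + γ j)) = 0 := by
  rcases isEmpty_or_nonempty ι with hι | hι
  · exact ⟨0, 0, isEmptyElim, fun j => by simp⟩
  rcases isEmpty_or_nonempty κ with hκ | hκ
  · exact ⟨0, 0, fun i => by simp, isEmptyElim⟩
  have hm : (Fintype.card ι : ℝ) ≠ 0 := by positivity
  have hn : (Fintype.card κ : ℝ) ≠ 0 := by positivity
  set T := ∑ i, ∑ j, D i j
  refine ⟨fun i => (∑ j, D i j) / Fintype.card κ - T / (Fintype.card ι * Fintype.card κ),
    fun j => (∑ i, D i j) / Fintype.card ι, fun i => ?_, fun j => ?_⟩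
  · simp only [sum_sub_distrib, sum_add_distrib, sum_const, card_univ, nsmul_eq_mul, ← sum_div]
    rw [sum_comm]
    field_simp
    ring
  · simp only [sum_sub_distrib, sum_add_distrib, sum_const, card_univ, nsmul_eq_mul, ← sum_div]
    field_simp
    ring

theorem additiveResidual_eq_add {D : Matrix ι κ ℝ} {ρ : ι → ℝ} {γ : κ → ℝ}
    (hrow : ∀ i, ∑ j, (D i j - (ρ i + γ j)) = 0) (hcol : ∀ j, ∑ i, (D i j - (ρ i + γ j)) = 0)
    (u : ι → ℝ) (v : κ → ℝ) :
    additiveResidual D u v =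
      additiveResidual D ρ γ + ∑ i, ∑ j, (ρ i - u i + (γ j - v j)) ^ 2 := by
  have hcross := sum_sum_mul_add_eq_zero (R := fun i j => D i j - (ρ i + γ j)) hrow hcol
    (ρ - u) (γ - v)
  have hsplit : ∀ i j, (D i j - (u i + v j)) ^ 2 = (D i j - (ρ i + γ j)) ^ 2 +
      2 * ((D i j - (ρ i + γ j)) * ((ρ - u) i + (γ - v) j)) + (ρ i - u i + (γ j - v j)) ^ 2 := by
    intro i j; simp only [Pi.sub_apply]; ring
  simp only [additiveResidual, hsplit, sum_add_distrib, ← mul_sum, hcross, mul_zero, add_zero]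

theorem exists_additiveResidual_le (D : Matrix ι κ ℝ) :
    ∃ (ρ : ι → ℝ) (γ : κ → ℝ), ∀ u v, additiveResidual D ρ γ ≤ additiveResidual D u v := by
  obtain ⟨ρ, γ, hrow, hcol⟩ := exists_residual_row_col_sum_eq_zero D
  refine ⟨ρ, γ, fun u v => ?_⟩
  rw [additiveResidual_eq_add hrow hcol u v]
  exact le_add_of_nonneg_right (by positivity)

end AdditiveResidual

theorem residInf_le_additiveResidual {m n : ℕ} (D : Matrix (Fin m) (Fin n) ℝ)
    (u : Fin m → ℝ) (v : Fin n → ℝ) : residInf D ≤ additiveResidual D u v :=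
  csInf_le ⟨0, by rintro _ ⟨u, v, rfl⟩; exact additiveResidual_nonneg D u v⟩ ⟨u, v, rfl⟩

theorem exists_residInf_eq_additiveResidual {m n : ℕ} (D : Matrix (Fin m) (Fin n) ℝ) :
    ∃ u v, residInf D = additiveResidual D u v := by
  obtain ⟨ρ, γ, hmin⟩ := exists_additiveResidual_le D
  refine ⟨ρ, γ, le_antisymm (residInf_le_additiveResidual D ρ γ) ?_⟩
  exact le_csInf ⟨_, 0, 0, rfl⟩ (by rintro _ ⟨u, v, rfl⟩; exact hmin u v)

theorem residInf_pos_iff {m n : ℕ} {D : Matrix (Fin m) (Fin n) ℝ} :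
    0 < residInf D ↔ ¬∃ (u : Fin m → ℝ) (v : Fin n → ℝ), ∀ i j, D i j = u i + v j := by
  obtain ⟨ρ, γ, hργ⟩ := exists_residInf_eq_additiveResidual D
  constructor
  · rintro hpos ⟨u, v, huv⟩
    have := residInf_le_additiveResidual D u v
    rw [additiveResidual_eq_zero_iff.2 huv] at this
    linarith
  · intro hnot
    rw [hργ]
    exact (additiveResidual_nonneg D ρ γ).lt_of_ne'
      fun h => hnot ⟨ρ, γ, additiveResidual_eq_zero_iff.1 h⟩

theorem iot_prediction_error_lower_bound_general (m n : ℕ) (lam : ℝ) (hlam : 0 < lam)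
    (C₀ Cpred : Matrix (Fin m) (Fin n) ℝ)
    (π₀ πpred : Matrix (Fin m) (Fin n) ℝ)
    (a a' : Fin m → ℝ) (b b' : Fin n → ℝ)
    (hπ₀ : ∀ i j, Real.log (π₀ i j) = lam * (-C₀ i j + a i + b j))
    (hπpred : ∀ i j, Real.log (πpred i j) = lam * (-Cpred i j + a' i + b' j))
    (hnot : ¬ ∃ (u : Fin m → ℝ) (v : Fin n → ℝ), ∀ i j,
        C₀ i j - Cpred i j = u i + v j) :
    lam ^ 2 * residInf (Matrix.of fun i j => C₀ i j - Cpred i j)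
      ≤ ∑ i, ∑ j, (Real.log (π₀ i j) - Real.log (πpred i j)) ^ 2 ∧
    0 < lam ^ 2 * residInf (Matrix.of fun i j => C₀ i j - Cpred i j) ∧
    π₀ ≠ πpred := by
  set ΔC : Matrix (Fin m) (Fin n) ℝ := Matrix.of fun i j => C₀ i j - Cpred i j
  have hlog : ∑ i, ∑ j, (Real.log (π₀ i j) - Real.log (πpred i j)) ^ 2 =
      lam ^ 2 * additiveResidual ΔC (a - a') (b - b') := by
    simp only [additiveResidual, mul_sum, hπ₀, hπpred, ΔC, Matrix.of_apply, Pi.sub_apply]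
    congr! 2 with i _ j _
    ring
  have hbound : lam ^ 2 * residInf ΔC
      ≤ ∑ i, ∑ j, (Real.log (π₀ i j) - Real.log (πpred i j)) ^ 2 := by
    rw [hlog]
    gcongr
    exact residInf_le_additiveResidual ΔC _ _
  have hpos : 0 < lam ^ 2 * residInf ΔC :=
    mul_pos (pow_pos hlam 2) (residInf_pos_iff.2 (by simpa [ΔC] using hnot))
  refine ⟨hbound, hpos, ?_⟩
  rintro rfl
  simp only [sub_self, sq, mul_zero, sum_const_zero] at hbound
  linarith

/-- If `log π₀ = λ(−C₀ + a𝟙ᵀ + 𝟙bᵀ)` and `log π_pred = λ(−C_pred + a'𝟙ᵀ + 𝟙b'ᵀ)` with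
`π₀, π_pred` entrywise positive, and `ΔC = C₀ − C_pred` is not of the form `u𝟙ᵀ + 𝟙vᵀ`,
then `‖log π₀ − log π_pred‖_F² ≥ λ²·inf_{u,v} ‖ΔC − (u𝟙ᵀ + 𝟙vᵀ)‖_F²`, the lower bound is
strictly positive, and in particular `π₀ ≠ π_pred`. -/
theorem iot_prediction_error_lower_bound (m n : ℕ) (lam : ℝ) (hlam : 0 < lam)
    (C₀ Cpred : Matrix (Fin m) (Fin n) ℝ)
    (π₀ πpred : Matrix (Fin m) (Fin n) ℝ)
    (hπ₀pos : ∀ i j, 0 < π₀ i j) (hπpredpos : ∀ i j, 0 < πpred i j)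
    (a a' : Fin m → ℝ) (b b' : Fin n → ℝ)
    (hπ₀ : ∀ i j, Real.log (π₀ i j) = lam * (-C₀ i j + a i + b j))
    (hπpred : ∀ i j, Real.log (πpred i j) = lam * (-Cpred i j + a' i + b' j))
    (hnot : ¬ ∃ (u : Fin m → ℝ) (v : Fin n → ℝ), ∀ i j,
        C₀ i j - Cpred i j = u i + v j) :
    lam ^ 2 * residInf (Matrix.of fun i j => C₀ i j - Cpred i j)
      ≤ ∑ i, ∑ j, (Real.log (π₀ i j) - Real.log (πpred i j)) ^ 2 ∧
    0 < lam ^ 2 * residInf (Matrix.of fun i j => C₀ i j - Cpred i j) ∧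
    π₀ ≠ πpred :=
  iot_prediction_error_lower_bound_general m n lam hlam C₀ Cpred π₀ πpred a a' b b' hπ₀ hπpred hnot
end

section
/- Let μ̂ ∈ Σ_m and ν̂ ∈ Σ_n, let Z ∈ ℝ^{m×n} have strictly positive entries, and let M ∈ ℝ^{m×n} be arbitrary. Then the function h(ξ, η) = −Σ_i μ̂_i log ξ_i − Σ_j ν̂_j log η_j + ξ^T M η is bounded below on the feasible set of entrywise-positive vectors ξ ∈ ℝ^m, η ∈ ℝ^n satisfying ξ^T Z η = 1; that is, there exists L ∈ ℝ such that h(ξ, η) ≥ L for all such (ξ, η). -/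
/-- For probability vectors `μ̂ ∈ Σ_m`, `ν̂ ∈ Σ_n`, an entrywise-positive matrix `Z`, and an
arbitrary matrix `M`, the function
`h(ξ, η) = −∑ᵢ μ̂ᵢ log ξᵢ − ∑ⱼ ν̂ⱼ log ηⱼ + ξᵀMη`
is bounded below on the feasible set of entrywise-positive `ξ, η` with `ξᵀZη = 1`. -/
theorem riot_inner_objective_bounded_below (m n : ℕ)
    (μhat : Fin m → ℝ) (νhat : Fin n → ℝ)
    (hμ0 : ∀ i, 0 ≤ μhat i) (hμ1 : ∑ i, μhat i = 1)
    (hν0 : ∀ j, 0 ≤ νhat j) (hν1 : ∑ j, νhat j = 1)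
    (Z M : Matrix (Fin m) (Fin n) ℝ) (hZ : ∀ i j, 0 < Z i j) :
    ∃ L : ℝ, ∀ (ξ : Fin m → ℝ) (η : Fin n → ℝ),
      (∀ i, 0 < ξ i) → (∀ j, 0 < η j) →
      (∑ i, ∑ j, ξ i * Z i j * η j = 1) →
      L ≤ (-∑ i, μhat i * Real.log (ξ i)) - (∑ j, νhat j * Real.log (η j))
            + ∑ i, ∑ j, ξ i * M i j * η j := by
  have hm : 0 < m := by
    by_contra h
    interval_cases m
    simp at hμ1
  have hn : 0 < n := by
    by_contra h
    interval_cases n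
    simp at hν1
  haveI : Nonempty (Fin m) := ⟨⟨0, hm⟩⟩
  haveI : Nonempty (Fin n) := ⟨⟨0, hn⟩⟩
  set z : ℝ := Finset.univ.inf' Finset.univ_nonempty
    (fun i : Fin m => Finset.univ.inf' Finset.univ_nonempty (fun j : Fin n => Z i j)) with hzdef
  obtain ⟨i0, -, hi0⟩ := Finset.exists_mem_eq_inf' (Finset.univ_nonempty)
    (fun i : Fin m => Finset.univ.inf' Finset.univ_nonempty (fun j : Fin n => Z i j))
  obtain ⟨j0, -, hj0⟩ := Finset.exists_mem_eq_inf' (Finset.univ_nonempty)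
    (fun j : Fin n => Z i0 j)
  have hz : 0 < z := by rw [hzdef, hi0, hj0]; exact hZ i0 j0
  have hzle : ∀ i j, z ≤ Z i j := by
    intro i j
    calc z ≤ Finset.univ.inf' Finset.univ_nonempty (fun j : Fin n => Z i j) :=
          Finset.inf'_le _ (Finset.mem_univ i)
      _ ≤ Z i j := Finset.inf'_le _ (Finset.mem_univ j)
  refine ⟨Real.log z - (∑ i, ∑ j, |M i j|) / z, fun ξ η hξ hη hcon => ?_⟩
  -- key bound: ξ i * η j ≤ 1/z
  have key : ∀ i j, ξ i * η j ≤ z⁻¹ := by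
    intro i j
    have h1 : ξ i * Z i j * η j ≤ 1 := by
      rw [← hcon]
      have := Finset.single_le_sum (f := fun i => ∑ j, ξ i * Z i j * η j)
        (fun i _ => Finset.sum_nonneg fun j _ =>
          mul_nonneg (mul_nonneg (hξ i).le (hZ i j).le) (hη j).le) (Finset.mem_univ i)
      refine le_trans ?_ this
      exact Finset.single_le_sum (f := fun j => ξ i * Z i j * η j)
        (fun j _ => mul_nonneg (mul_nonneg (hξ i).le (hZ i j).le) (hη j).le)
        (Finset.mem_univ j)
    have h2 : ξ i * η j * z ≤ ξ i * Z i j * η j := by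
      have := mul_le_mul_of_nonneg_left (hzle i j)
        (mul_nonneg (hξ i).le (hη j).le)
      nlinarith [this]
    have h3 : ξ i * η j * z ≤ 1 := h2.trans h1
    calc ξ i * η j = ξ i * η j * z * z⁻¹ := by field_simp
      _ ≤ 1 * z⁻¹ := mul_le_mul_of_nonneg_right h3 (inv_nonneg.mpr hz.le)
      _ = z⁻¹ := one_mul _
  -- log bound
  have hlog : ∑ i, μhat i * Real.log (ξ i) + ∑ j, νhat j * Real.log (η j) ≤ -Real.log z := by
    have heq : ∑ i, ∑ j, μhat i * νhat j * Real.log (ξ i * η j)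
        = ∑ i, μhat i * Real.log (ξ i) + ∑ j, νhat j * Real.log (η j) := by
      calc ∑ i, ∑ j, μhat i * νhat j * Real.log (ξ i * η j)
          = ∑ i, ∑ j, (μhat i * Real.log (ξ i) * νhat j
              + μhat i * (νhat j * Real.log (η j))) := by
            refine Finset.sum_congr rfl fun i _ => Finset.sum_congr rfl fun j _ => ?_
            rw [Real.log_mul (hξ i).ne' (hη j).ne']; ring
        _ = ∑ i, (μhat i * Real.log (ξ i) * (∑ j, νhat j)
              + μhat i * (∑ j, νhat j * Real.log (η j))) := by
            refine Finset.sum_congr rfl fun i _ => ?_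
            rw [Finset.sum_add_distrib, ← Finset.mul_sum, ← Finset.mul_sum]
        _ = ∑ i, μhat i * Real.log (ξ i) + ∑ j, νhat j * Real.log (η j) := by
            rw [hν1, Finset.sum_add_distrib]
            simp only [mul_one]
            rw [← Finset.sum_mul, hμ1, one_mul]
    rw [← heq]
    have hbound : ∑ i, ∑ j, μhat i * νhat j * Real.log (ξ i * η j)
        ≤ ∑ i, ∑ j, μhat i * νhat j * Real.log z⁻¹ := by
      refine Finset.sum_le_sum fun i _ => Finset.sum_le_sum fun j _ => ?_
      exact mul_le_mul_of_nonneg_left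
        (Real.log_le_log (mul_pos (hξ i) (hη j)) (key i j))
        (mul_nonneg (hμ0 i) (hν0 j))
    refine hbound.trans (le_of_eq ?_)
    have inner : ∀ i : Fin m, ∑ j, μhat i * νhat j * Real.log z⁻¹
        = μhat i * Real.log z⁻¹ := by
      intro i
      calc ∑ j, μhat i * νhat j * Real.log z⁻¹
          = μhat i * Real.log z⁻¹ * ∑ j, νhat j := by
            rw [Finset.mul_sum]
            exact Finset.sum_congr rfl fun j _ => by ring
        _ = μhat i * Real.log z⁻¹ := by rw [hν1, mul_one]
    simp only [inner]
    rw [← Finset.sum_mul, hμ1, one_mul, Real.log_inv]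
  -- M bound
  have hM : -((∑ i, ∑ j, |M i j|) / z) ≤ ∑ i, ∑ j, ξ i * M i j * η j := by
    rw [neg_le]
    have : -(∑ i, ∑ j, ξ i * M i j * η j) = ∑ i, ∑ j, -(ξ i * M i j * η j) := by
      simp [Finset.sum_neg_distrib]
    rw [this, Finset.sum_div]
    refine Finset.sum_le_sum fun i _ => ?_
    rw [Finset.sum_div]
    refine Finset.sum_le_sum fun j _ => ?_
    have h1 : -(ξ i * M i j * η j) ≤ |M i j| * (ξ i * η j) := by
      have := neg_abs_le (ξ i * M i j * η j)
      have habs : |ξ i * M i j * η j| = |M i j| * (ξ i * η j) := by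
        rw [abs_mul, abs_mul, abs_of_pos (hξ i), abs_of_pos (hη j)]; ring
      linarith [(neg_le_abs (ξ i * M i j * η j)), habs ▸ (neg_abs_le (ξ i * M i j * η j))]
    refine h1.trans ?_
    rw [div_eq_mul_inv]
    exact mul_le_mul_of_nonneg_left (key i j) (abs_nonneg _)
  linarith [hlog, hM]
end

section
/- Let μ̂ ∈ Σ_m and ν̂ ∈ Σ_n, let M, Z ∈ ℝ^{m×n}, let ξ ∈ ℝ^m and η ∈ ℝ^n be entrywise-positive vectors, and let θ₁, θ₂ ∈ ℝ. Suppose the stationarity conditions μ̂_i/ξ_i = (Mη)_i − θ₁ (Zη)_i for all i and ν̂_j/η_j = (M^T ξ)_j − θ₂ (Z^T ξ)_j for all j hold, together with the normalization ξ^T Z η = 1. Then θ₁ = θ₂. (This is the key identity showing that, at a limit point of the alternating updates, the two Lagrange multipliers of the alternating subproblems coincide and the limit point satisfies the KKT conditions of the joint constrained problem.) -/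
/-- At a point satisfying the stationarity conditions of the two alternating subproblems
(with Lagrange multipliers `θ₁`, `θ₂`) together with the normalization `ξᵀZη = 1`, the two
multipliers coincide: `θ₁ = θ₂`. -/
theorem riot_lagrange_multipliers_coincide (m n : ℕ)
    (μhat : Fin m → ℝ) (νhat : Fin n → ℝ)
    (hμ0 : ∀ i, 0 ≤ μhat i) (hμ1 : ∑ i, μhat i = 1)
    (hν0 : ∀ j, 0 ≤ νhat j) (hν1 : ∑ j, νhat j = 1)
    (M Z : Matrix (Fin m) (Fin n) ℝ)
    (ξ : Fin m → ℝ) (η : Fin n → ℝ)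
    (hξ : ∀ i, 0 < ξ i) (hη : ∀ j, 0 < η j)
    (θ₁ θ₂ : ℝ)
    (hstat1 : ∀ i, μhat i / ξ i = (∑ j, M i j * η j) - θ₁ * ∑ j, Z i j * η j)
    (hstat2 : ∀ j, νhat j / η j = (∑ i, M i j * ξ i) - θ₂ * ∑ i, Z i j * ξ i)
    (hnorm : ∑ i, ∑ j, ξ i * Z i j * η j = 1) :
    θ₁ = θ₂ := by
  have hSM : ∑ i, ∑ j, ξ i * (M i j * η j) = ∑ j, ∑ i, ξ i * (M i j * η j) :=
    Finset.sum_comm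
  have hSZ : ∑ i, ∑ j, ξ i * (Z i j * η j) = 1 := by
    rw [← hnorm]
    exact Finset.sum_congr rfl fun i _ => Finset.sum_congr rfl fun j _ => by ring
  have hSZ' : ∑ j, ∑ i, ξ i * (Z i j * η j) = 1 := by
    rw [← hSZ]; exact (Finset.sum_comm).symm
  have h1 : (1 : ℝ) = (∑ i, ∑ j, ξ i * (M i j * η j)) - θ₁ := by
    calc (1 : ℝ) = ∑ i, μhat i := hμ1.symm
    _ = ∑ i, ξ i * (μhat i / ξ i) := by
        refine Finset.sum_congr rfl fun i _ => ?_
        rw [mul_comm, div_mul_cancel₀ _ (hξ i).ne']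
    _ = ∑ i, ξ i * ((∑ j, M i j * η j) - θ₁ * ∑ j, Z i j * η j) := by
        congr 1; ext i; rw [hstat1 i]
    _ = ∑ i, ((∑ j, ξ i * (M i j * η j)) - θ₁ * ∑ j, ξ i * (Z i j * η j)) := by
        refine Finset.sum_congr rfl fun i _ => ?_
        rw [mul_sub, mul_left_comm, Finset.mul_sum, Finset.mul_sum]
    _ = (∑ i, ∑ j, ξ i * (M i j * η j)) - θ₁ * ∑ i, ∑ j, ξ i * (Z i j * η j) := by
        rw [Finset.sum_sub_distrib, ← Finset.mul_sum]
    _ = (∑ i, ∑ j, ξ i * (M i j * η j)) - θ₁ := by rw [hSZ, mul_one]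
  have h2 : (1 : ℝ) = (∑ j, ∑ i, ξ i * (M i j * η j)) - θ₂ := by
    calc (1 : ℝ) = ∑ j, νhat j := hν1.symm
    _ = ∑ j, η j * (νhat j / η j) := by
        refine Finset.sum_congr rfl fun j _ => ?_
        rw [mul_comm, div_mul_cancel₀ _ (hη j).ne']
    _ = ∑ j, η j * ((∑ i, M i j * ξ i) - θ₂ * ∑ i, Z i j * ξ i) := by
        congr 1; ext j; rw [hstat2 j]
    _ = ∑ j, ((∑ i, ξ i * (M i j * η j)) - θ₂ * ∑ i, ξ i * (Z i j * η j)) := by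
        refine Finset.sum_congr rfl fun j _ => ?_
        rw [mul_sub, mul_left_comm, Finset.mul_sum, Finset.mul_sum]
        congr 1
        · exact Finset.sum_congr rfl fun i _ => by ring
        · congr 1; exact Finset.sum_congr rfl fun i _ => by ring
    _ = (∑ j, ∑ i, ξ i * (M i j * η j)) - θ₂ * ∑ j, ∑ i, ξ i * (Z i j * η j) := by
        rw [Finset.sum_sub_distrib, ← Finset.mul_sum]
    _ = (∑ j, ∑ i, ξ i * (M i j * η j)) - θ₂ := by rw [hSZ', mul_one]
  rw [hSM] at h1
  linarith
end
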